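/- For every integer m ≥ 3, the codes C(m, m−2, m, m, m) and C(m, m−3, m+1, m, m) are both optimal Hermitian LCD quaternary [5m, 2, 4m−1] codes, and they are not equivalent. -/
import Mathlib


open Finset

/-- The finite field with four elements. -/
abbrev F4 : Type := GaloisField 2 2

noncomputable instance : Fintype F4 := Fintype.ofFinite F4

lemma F4.card_eq : Fintype.card F4 = 4 := by
  simpa using GaloisField.card 2 2 (by norm_num)

lemma F4.exists_omega : ∃ x : F4, x ^ 2 + x + 1 = 0 := by
  classical
  obtain ⟨x, hx0, hx1⟩ : ∃ x : F4, x ≠ 0 ∧ x ≠ 1 := by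
    by_contra h
    push_neg at h
    have hsub : (Finset.univ : Finset F4) ⊆ {0, 1} := by
      intro x _
      rcases eq_or_ne x 0 with h0 | h0
      · simp [h0]
      · simp [h x h0]
    have h1 := Finset.card_le_card hsub
    have h2 : ({0, 1} : Finset F4).card ≤ 2 := (Finset.card_insert_le _ _).trans (by simp)
    have h3 : (Finset.univ : Finset F4).card = 4 := F4.card_eq
    omega
  refine ⟨x, ?_⟩
  have hx : x ^ Fintype.card F4 = x := FiniteField.pow_card x
  rw [F4.card_eq] at hx
  have hmul : x * (x - 1) * (x ^ 2 + x + 1) = 0 := by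
    have : x * (x - 1) * (x ^ 2 + x + 1) = x ^ 4 - x := by ring
    rw [this, hx, sub_self]
  rcases mul_eq_zero.mp hmul with h | h
  · rcases mul_eq_zero.mp h with h | h
    · exact absurd h hx0
    · exact absurd (sub_eq_zero.mp h) hx1
  · exact h

/-- A fixed root of `X² + X + 1` in `F₄`. -/
noncomputable def ω4 : F4 := Classical.choose F4.exists_omega

lemma ω4_spec : ω4 ^ 2 + ω4 + 1 = 0 := Classical.choose_spec F4.exists_omega

open scoped Classical in
/-- Hamming weight of a vector. -/
noncomputable def wt {n : ℕ} (x : Fin n → F4) : ℕ :=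
  (Finset.univ.filter fun i => x i ≠ 0).card

/-- `C` is a code with minimum (nonzero) weight `d`. -/
noncomputable def hasMinWeight {n : ℕ} (C : Submodule F4 (Fin n → F4)) (d : ℕ) : Prop :=
  (∀ x ∈ C, x ≠ 0 → d ≤ wt x) ∧ ∃ x ∈ C, x ≠ 0 ∧ wt x = d

/-- The Hermitian inner product on `F₄ⁿ`; the conjugate of `x` is `x²`. -/
noncomputable def hermInner {n : ℕ} (u v : Fin n → F4) : F4 := ∑ i, u i * (v i) ^ 2

/-- The Hermitian dual code. -/
noncomputable def hermDual {n : ℕ} (C : Submodule F4 (Fin n → F4)) : Submodule F4 (Fin n → F4) where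
  carrier := {x | ∀ y ∈ C, hermInner x y = 0}
  zero_mem' := by intro y hy; simp [hermInner]
  add_mem' := by
    intro a b ha hb y hy
    have := ha y hy
    have := hb y hy
    simp only [hermInner, Pi.add_apply, add_mul, Finset.sum_add_distrib] at *
    simp [*]
  smul_mem' := by
    intro c a ha y hy
    have h := ha y hy
    simp only [hermInner, Pi.smul_apply, smul_eq_mul, mul_assoc, ← Finset.mul_sum] at *
    simp [h]

/-- `C` is a Hermitian linear complementary dual code. -/
noncomputable def IsHermLCD {n : ℕ} (C : Submodule F4 (Fin n → F4)) : Prop :=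
  C ⊓ hermDual C = ⊥

/-- The monomial linear map given by a permutation of coordinates followed by a
multiplication of each coordinate by a scalar. -/
noncomputable def monoMap {n : ℕ} (σ : Equiv.Perm (Fin n)) (s : Fin n → F4) :
    (Fin n → F4) →ₗ[F4] (Fin n → F4) where
  toFun x := fun i => s i * x (σ i)
  map_add' a b := by funext i; simp [mul_add]
  map_smul' c a := by funext i; simp [smul_eq_mul]; ring

/-- Two codes are equivalent if one is obtained from the other by a permutation of the
coordinates and multiplication of coordinates by nonzero scalars. -/
noncomputable def codeEquiv {n : ℕ} (C C' : Submodule F4 (Fin n → F4)) : Prop :=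
  ∃ (σ : Equiv.Perm (Fin n)) (s : Fin n → F4),
    (∀ i, s i ≠ 0) ∧ Submodule.map (monoMap σ s) C = C'

/-- First row of the generator matrix `G(a₁, a₂, a₃, a₄, a₅)`. -/
noncomputable def row1 (n a₁ : ℕ) : Fin n → F4 := fun i =>
  if i.val = 0 then 1
  else if i.val < 2 + a₁ then 0
  else 1

/-- Second row of the generator matrix `G(a₁, a₂, a₃, a₄, a₅)`. -/
noncomputable def row2 (n a₁ a₂ a₃ a₄ : ℕ) : Fin n → F4 := fun i =>
  if i.val = 0 then 0
  else if i.val < 2 + a₁ then 1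
  else if i.val < 2 + a₁ + a₂ then 0
  else if i.val < 2 + a₁ + a₂ + a₃ then 1
  else if i.val < 2 + a₁ + a₂ + a₃ + a₄ then ω4
  else ω4 ^ 2

set_option linter.unusedVariables false in
/-- The code `C(a₁, a₂, a₃, a₄, a₅)`, of length `n = 2 + a₁ + a₂ + a₃ + a₄ + a₅`:
the span of the rows of the generator matrix `G(a₁, a₂, a₃, a₄, a₅)` whose columns are
`(1,0)ᵀ`, `(0,1)ᵀ`, `a₁` columns `(0,1)ᵀ`, `a₂` columns `(1,0)ᵀ`, `a₃` columns `(1,1)ᵀ`,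
`a₄` columns `(1,ω)ᵀ` and `a₅` columns `(1,ω²)ᵀ`. -/
noncomputable def Ccode (n a₁ a₂ a₃ a₄ a₅ : ℕ) : Submodule F4 (Fin n → F4) :=
  Submodule.span F4 {row1 n a₁, row2 n a₁ a₂ a₃ a₄}

/-- The largest minimum weight among Hermitian LCD `[n,2]` codes. -/
def optimalDist (n : ℕ) : ℕ :=
  if n % 5 = 1 ∨ n % 5 = 2 ∨ n % 5 = 3 then 4 * n / 5 else 4 * n / 5 - 1

/-- `C` is an optimal Hermitian LCD `[n, 2, d]` code. -/
noncomputable def IsOptimalLCD (n d : ℕ) (C : Submodule F4 (Fin n → F4)) : Prop :=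
  Module.finrank F4 C = 2 ∧ hasMinWeight C d ∧ IsHermLCD C ∧ d = optimalDist n

/-- The linear map appending a zero coordinate: `x ↦ (x, 0)`. -/
noncomputable def extendZero (m : ℕ) : (Fin m → F4) →ₗ[F4] (Fin (m + 1) → F4) where
  toFun x := Fin.snoc x 0
  map_add' a b := by
    funext i
    refine Fin.lastCases ?_ ?_ i <;> simp
  map_smul' c a := by
    funext i
    refine Fin.lastCases ?_ ?_ i <;> simp

section Stmt18Aux

open Finset

lemma F4.two_eq_zero : (2 : F4) = 0 := CharP.cast_eq_zero F4 2

lemma ω4_sq : ω4 ^ 2 = ω4 + 1 := by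
  linear_combination ω4_spec - (ω4 + 1) * F4.two_eq_zero

lemma ω4_ne_zero : ω4 ≠ 0 := by
  intro h
  have := ω4_spec
  rw [h] at this
  simp at this

lemma ω4_ne_one : ω4 ≠ 1 := by
  intro h
  have h2 := ω4_spec
  rw [h] at h2
  have : (1 : F4) = 0 := by linear_combination h2 - F4.two_eq_zero
  simp at this

lemma ω4_sq_ne_zero : ω4 ^ 2 ≠ 0 := pow_ne_zero 2 ω4_ne_zero

lemma ω4_sq_ne_one : ω4 ^ 2 ≠ 1 := by
  intro h
  have h2 := ω4_spec
  rw [h] at h2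
  have : ω4 = 0 := by linear_combination h2 - F4.two_eq_zero
  exact ω4_ne_zero this

/-- the codeword function on ℕ. -/
noncomputable def cw (t1 t2 t3 t4 : ℕ) (α β : F4) (i : ℕ) : F4 :=
  if i = 0 then α else if i < t1 then β else if i < t2 then α
  else if i < t3 then α + β else if i < t4 then α + β * ω4 else α + β * ω4 ^ 2

lemma cw0 (t1 t2 t3 t4 : ℕ) (α β : F4) : cw t1 t2 t3 t4 α β 0 = α := by simp [cw]

lemma cw1 {t1 t2 t3 t4 i : ℕ} (α β : F4) (h1 : 1 ≤ i) (h2 : i < t1) :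
    cw t1 t2 t3 t4 α β i = β := by
  unfold cw; rw [if_neg (by omega), if_pos h2]

lemma cw2 {t1 t2 t3 t4 i : ℕ} (α β : F4) (ht : 1 ≤ t1) (h1 : t1 ≤ i) (h2 : i < t2) :
    cw t1 t2 t3 t4 α β i = α := by
  unfold cw; rw [if_neg (by omega), if_neg (by omega), if_pos h2]

lemma cw3 {t1 t2 t3 t4 i : ℕ} (α β : F4) (ht : 1 ≤ t1) (ht2 : t1 ≤ t2) (h1 : t2 ≤ i)
    (h2 : i < t3) : cw t1 t2 t3 t4 α β i = α + β := by
  unfold cw; rw [if_neg (by omega), if_neg (by omega), if_neg (by omega), if_pos h2]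

lemma cw4 {t1 t2 t3 t4 i : ℕ} (α β : F4) (ht : 1 ≤ t1) (ht2 : t1 ≤ t2) (ht3 : t2 ≤ t3)
    (h1 : t3 ≤ i) (h2 : i < t4) : cw t1 t2 t3 t4 α β i = α + β * ω4 := by
  unfold cw
  rw [if_neg (by omega), if_neg (by omega), if_neg (by omega), if_neg (by omega), if_pos h2]

lemma cw5 {t1 t2 t3 t4 i : ℕ} (α β : F4) (ht : 1 ≤ t1) (ht2 : t1 ≤ t2) (ht3 : t2 ≤ t3)
    (ht4 : t3 ≤ t4) (h1 : t4 ≤ i) : cw t1 t2 t3 t4 α β i = α + β * ω4 ^ 2 := by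
  unfold cw
  rw [if_neg (by omega), if_neg (by omega), if_neg (by omega), if_neg (by omega),
    if_neg (by omega)]

lemma combo_apply (n a₁ a₂ a₃ a₄ : ℕ) (α β : F4) (i : Fin n) :
    (α • row1 n a₁ + β • row2 n a₁ a₂ a₃ a₄) i
      = cw (2+a₁) (2+a₁+a₂) (2+a₁+a₂+a₃) (2+a₁+a₂+a₃+a₄) α β i.val := by
  simp only [Pi.add_apply, Pi.smul_apply, smul_eq_mul, row1, row2, cw]
  split_ifs <;> ring

lemma sum_piece {M : Type*} [AddCommMonoid M] {n t1 t2 t3 t4 : ℕ}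
    (h1 : 1 ≤ t1) (h2 : t1 ≤ t2) (h3 : t2 ≤ t3) (h4 : t3 ≤ t4) (h5 : t4 ≤ n)
    (g : ℕ → M) (c0 c1 c2 c3 c4 c5 : M)
    (hg0 : g 0 = c0)
    (hg1 : ∀ i, 1 ≤ i → i < t1 → g i = c1)
    (hg2 : ∀ i, t1 ≤ i → i < t2 → g i = c2)
    (hg3 : ∀ i, t2 ≤ i → i < t3 → g i = c3)
    (hg4 : ∀ i, t3 ≤ i → i < t4 → g i = c4)
    (hg5 : ∀ i, t4 ≤ i → i < n → g i = c5) :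
    ∑ i ∈ Finset.range n, g i
      = c0 + (t1-1) • c1 + (t2-t1) • c2 + (t3-t2) • c3 + (t4-t3) • c4 + (n-t4) • c5 := by
  have e : ∀ (a b : ℕ) (c : M), (∀ i, a ≤ i → i < b → g i = c) →
      ∑ i ∈ Finset.Ico a b, g i = (b - a) • c := by
    intro a b c hc
    rw [← Nat.card_Ico a b, ← Finset.sum_const]
    exact Finset.sum_congr rfl (fun i hi => by
      rw [Finset.mem_Ico] at hi; exact hc i hi.1 hi.2)
  rw [Finset.range_eq_Ico,
      ← Finset.sum_Ico_consecutive g (Nat.zero_le t4) h5,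
      ← Finset.sum_Ico_consecutive g (Nat.zero_le t3) h4,
      ← Finset.sum_Ico_consecutive g (Nat.zero_le t2) h3,
      ← Finset.sum_Ico_consecutive g (Nat.zero_le t1) h2,
      ← Finset.sum_Ico_consecutive g (Nat.zero_le 1) h1]
  rw [e 0 1 c0 (fun i h1i h2i => by
        have : i = 0 := by omega
        rw [this, hg0]),
      e 1 t1 c1 hg1, e t1 t2 c2 hg2, e t2 t3 c3 hg3, e t3 t4 c4 hg4, e t4 n c5 hg5]
  simp only [Nat.sub_zero, one_smul]

open scoped Classical in
lemma wt_cw {n t1 t2 t3 t4 : ℕ}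
    (h1 : 1 ≤ t1) (h2 : t1 ≤ t2) (h3 : t2 ≤ t3) (h4 : t3 ≤ t4) (h5 : t4 ≤ n) (α β : F4) :
    wt (fun i : Fin n => cw t1 t2 t3 t4 α β i.val) =
      (if α ≠ 0 then 1 else 0) + (if β ≠ 0 then t1-1 else 0) + (if α ≠ 0 then t2-t1 else 0)
      + (if α+β ≠ 0 then t3-t2 else 0) + (if α+β*ω4 ≠ 0 then t4-t3 else 0)
      + (if α+β*ω4^2 ≠ 0 then n-t4 else 0) := by
  classical
  have h0 : wt (fun i : Fin n => cw t1 t2 t3 t4 α β i.val)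
      = ∑ i ∈ Finset.range n, (fun j => if cw t1 t2 t3 t4 α β j ≠ 0 then 1 else 0) i := by
    unfold wt
    rw [Finset.card_filter]
    exact Fin.sum_univ_eq_sum_range
      (fun j => if cw t1 t2 t3 t4 α β j ≠ 0 then (1:ℕ) else 0) n
  have hsp := sum_piece (M := ℕ) h1 h2 h3 h4 h5
      (fun j => if cw t1 t2 t3 t4 α β j ≠ 0 then (1:ℕ) else 0)
      (if α ≠ 0 then 1 else 0) (if β ≠ 0 then 1 else 0) (if α ≠ 0 then 1 else 0)
      (if α+β ≠ 0 then 1 else 0) (if α+β*ω4 ≠ 0 then 1 else 0) (if α+β*ω4^2 ≠ 0 then 1 else 0)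
      (by simp only [cw0]) (fun i hi1 hi2 => by simp only [cw1 α β hi1 hi2])
      (fun i hi1 hi2 => by simp only [cw2 α β h1 hi1 hi2])
      (fun i hi1 hi2 => by simp only [cw3 α β h1 h2 hi1 hi2])
      (fun i hi1 hi2 => by simp only [cw4 α β h1 h2 h3 hi1 hi2])
      (fun i hi1 _ => by simp only [cw5 α β h1 h2 h3 h4 hi1])
  rw [h0, hsp]
  split_ifs <;> simp

lemma herm_cw {n t1 t2 t3 t4 : ℕ}
    (h1 : 1 ≤ t1) (h2 : t1 ≤ t2) (h3 : t2 ≤ t3) (h4 : t3 ≤ t4) (h5 : t4 ≤ n) (α β γ δ : F4) :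
    hermInner (fun i : Fin n => cw t1 t2 t3 t4 α β i.val)
        (fun i : Fin n => cw t1 t2 t3 t4 γ δ i.val)
      = α*γ^2 + (t1-1) • (β*δ^2) + (t2-t1) • (α*γ^2) + (t3-t2) • ((α+β)*(γ+δ)^2)
        + (t4-t3) • ((α+β*ω4)*(γ+δ*ω4)^2) + (n-t4) • ((α+β*ω4^2)*(γ+δ*ω4^2)^2) := by
  have h0 : hermInner (fun i : Fin n => cw t1 t2 t3 t4 α β i.val)
        (fun i : Fin n => cw t1 t2 t3 t4 γ δ i.val)
      = ∑ i ∈ Finset.range n,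
          (fun j => cw t1 t2 t3 t4 α β j * (cw t1 t2 t3 t4 γ δ j)^2) i := by
    unfold hermInner
    exact Fin.sum_univ_eq_sum_range
      (fun j => cw t1 t2 t3 t4 α β j * (cw t1 t2 t3 t4 γ δ j)^2) n
  have hsp := sum_piece (M := F4) h1 h2 h3 h4 h5
      (fun j => cw t1 t2 t3 t4 α β j * (cw t1 t2 t3 t4 γ δ j)^2)
      (α*γ^2) (β*δ^2) (α*γ^2) ((α+β)*(γ+δ)^2) ((α+β*ω4)*(γ+δ*ω4)^2)
      ((α+β*ω4^2)*(γ+δ*ω4^2)^2)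
      (by simp only [cw0]) (fun i hi1 hi2 => by simp only [cw1 α β hi1 hi2, cw1 γ δ hi1 hi2])
      (fun i hi1 hi2 => by simp only [cw2 α β h1 hi1 hi2, cw2 γ δ h1 hi1 hi2])
      (fun i hi1 hi2 => by simp only [cw3 α β h1 h2 hi1 hi2, cw3 γ δ h1 h2 hi1 hi2])
      (fun i hi1 hi2 => by simp only [cw4 α β h1 h2 h3 hi1 hi2, cw4 γ δ h1 h2 h3 hi1 hi2])
      (fun i hi1 _ => by simp only [cw5 α β h1 h2 h3 h4 hi1, cw5 γ δ h1 h2 h3 h4 hi1])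
  rw [h0, hsp]

end Stmt18Aux

lemma row1_eq_combo (n a₁ a₂ a₃ a₄ : ℕ) :
    row1 n a₁ = (1:F4) • row1 n a₁ + (0:F4) • row2 n a₁ a₂ a₃ a₄ := by simp

open scoped Classical in
lemma wt_combo (n a₁ a₂ a₃ a₄ a₅ : ℕ) (hn : n = 2+a₁+a₂+a₃+a₄+a₅) (α β : F4) :
    wt (α • row1 n a₁ + β • row2 n a₁ a₂ a₃ a₄)
      = (if α ≠ 0 then 1+a₂ else 0) + (if β ≠ 0 then 1+a₁ else 0)
        + (if α+β ≠ 0 then a₃ else 0) + (if α+β*ω4 ≠ 0 then a₄ else 0)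
        + (if α+β*ω4^2 ≠ 0 then a₅ else 0) := by
  classical
  have hx : (α • row1 n a₁ + β • row2 n a₁ a₂ a₃ a₄)
      = fun i : Fin n => cw (2+a₁) (2+a₁+a₂) (2+a₁+a₂+a₃) (2+a₁+a₂+a₃+a₄) α β i.val :=
    funext (combo_apply n a₁ a₂ a₃ a₄ α β)
  rw [hx, wt_cw (by omega) (by omega) (by omega) (by omega) (by omega) α β]
  split_ifs <;> omega

lemma herm_combo (n a₁ a₂ a₃ a₄ a₅ : ℕ) (hn : n = 2+a₁+a₂+a₃+a₄+a₅) (α β γ δ : F4) :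
    hermInner (α • row1 n a₁ + β • row2 n a₁ a₂ a₃ a₄)
        (γ • row1 n a₁ + δ • row2 n a₁ a₂ a₃ a₄)
      = α*γ^2 + (1+a₁) • (β*δ^2) + a₂ • (α*γ^2) + a₃ • ((α+β)*(γ+δ)^2)
        + a₄ • ((α+β*ω4)*(γ+δ*ω4)^2) + a₅ • ((α+β*ω4^2)*(γ+δ*ω4^2)^2) := by
  rw [funext (combo_apply n a₁ a₂ a₃ a₄ α β), funext (combo_apply n a₁ a₂ a₃ a₄ γ δ),
    herm_cw (by omega) (by omega) (by omega) (by omega) (by omega) α β γ δ,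
    show 2+a₁-1 = 1+a₁ by omega, show 2+a₁+a₂-(2+a₁) = a₂ by omega,
    show 2+a₁+a₂+a₃-(2+a₁+a₂) = a₃ by omega,
    show 2+a₁+a₂+a₃+a₄-(2+a₁+a₂+a₃) = a₄ by omega,
    show n-(2+a₁+a₂+a₃+a₄) = a₅ by omega]

lemma pair34 {α β : F4} (hβ : β ≠ 0) (h3 : α + β = 0) : α + β * ω4 ≠ 0 := by
  intro hc
  have hd : β * (ω4 - 1) = 0 := by linear_combination hc - h3
  rcases mul_eq_zero.mp hd with h | h
  · exact hβ h
  · exact ω4_ne_one (by linear_combination h)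

lemma pair35 {α β : F4} (hβ : β ≠ 0) (h3 : α + β = 0) : α + β * ω4^2 ≠ 0 := by
  intro hc
  have hd : β * (ω4^2 - 1) = 0 := by linear_combination hc - h3
  rcases mul_eq_zero.mp hd with h | h
  · exact hβ h
  · exact ω4_sq_ne_one (by linear_combination h)

lemma pair45 {α β : F4} (hβ : β ≠ 0) (h4 : α + β * ω4 = 0) : α + β * ω4^2 ≠ 0 := by
  intro hc
  have hd : β * ω4 * (ω4 - 1) = 0 := by linear_combination hc - h4
  rcases mul_eq_zero.mp hd with h | h
  · rcases mul_eq_zero.mp h with h' | h'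
    · exact hβ h'
    · exact ω4_ne_zero h'
  · exact ω4_ne_one (by linear_combination h)

lemma rows_li (n a₁ a₂ a₃ a₄ : ℕ) (hn : 2 ≤ n) (s t : F4)
    (h : s • row1 n a₁ + t • row2 n a₁ a₂ a₃ a₄ = 0) : s = 0 ∧ t = 0 := by
  have h0 := congrFun h ⟨0, by omega⟩
  have h1 := congrFun h ⟨1, by omega⟩
  simp [row1, row2, show (1:ℕ) < 2 + a₁ by omega] at h0 h1
  exact ⟨h0, h1⟩

lemma row1_ne_zero (n a₁ : ℕ) (hn : 0 < n) : row1 n a₁ ≠ 0 := by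
  intro h
  have := congrFun h ⟨0, hn⟩
  simp [row1] at this

lemma finrank_Ccode (n a₁ a₂ a₃ a₄ a₅ : ℕ) (hn : 2 ≤ n) :
    Module.finrank F4 (Ccode n a₁ a₂ a₃ a₄ a₅) = 2 := by
  have hli : LinearIndependent F4 ![row1 n a₁, row2 n a₁ a₂ a₃ a₄] :=
    LinearIndependent.pair_iff.mpr (fun s t h => rows_li n a₁ a₂ a₃ a₄ hn s t h)
  have hr : (Set.range ![row1 n a₁, row2 n a₁ a₂ a₃ a₄])
      = {row1 n a₁, row2 n a₁ a₂ a₃ a₄} := by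
    simp [Matrix.range_cons, Matrix.range_empty, Set.pair_comm]
  rw [Ccode, ← hr, finrank_span_eq_card hli]
  simp

lemma wt_monoMap {n : ℕ} (σ : Equiv.Perm (Fin n)) (s : Fin n → F4) (hs : ∀ i, s i ≠ 0)
    (x : Fin n → F4) : wt (monoMap σ s x) = wt x := by
  classical
  unfold wt monoMap
  simp only [LinearMap.coe_mk, AddHom.coe_mk]
  apply Finset.card_equiv σ
  intro i
  simp [hs i, mul_eq_zero]

open scoped Classical in
lemma wt_lower_beta (n a₁ a₂ a₃ a₄ a₅ d : ℕ) (hn : n = 2+a₁+a₂+a₃+a₄+a₅)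
    (h2 : d ≤ 1+a₁+a₃+a₄+a₅) (h3 : d ≤ 2+a₁+a₂+a₄+a₅) (h4 : d ≤ 2+a₁+a₂+a₃+a₅)
    (h5 : d ≤ 2+a₁+a₂+a₃+a₄) (α β : F4) (hβ : β ≠ 0) :
    d ≤ wt (α • row1 n a₁ + β • row2 n a₁ a₂ a₃ a₄) := by
  classical
  rw [wt_combo n a₁ a₂ a₃ a₄ a₅ hn α β]
  by_cases hα : α = 0
  · rw [hα]
    have e1 : (0:F4) + β ≠ 0 := by simpa using hβ
    have e2 : (0:F4) + β * ω4 ≠ 0 := by simpa using mul_ne_zero hβ ω4_ne_zero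
    have e3 : (0:F4) + β * ω4^2 ≠ 0 := by simpa using mul_ne_zero hβ ω4_sq_ne_zero
    rw [if_neg (by simp), if_pos hβ, if_pos e1, if_pos e2, if_pos e3]
    omega
  · by_cases hab : α + β = 0
    · rw [if_pos hα, if_pos hβ, if_neg (not_not.mpr hab), if_pos (pair34 hβ hab),
        if_pos (pair35 hβ hab)]
      omega
    · by_cases hab4 : α + β * ω4 = 0
      · rw [if_pos hα, if_pos hβ, if_pos hab, if_neg (not_not.mpr hab4),
          if_pos (pair45 hβ hab4)]
        omega
      · by_cases hab5 : α + β * ω4^2 = 0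
        · rw [if_pos hα, if_pos hβ, if_pos hab, if_pos hab4, if_neg (not_not.mpr hab5)]
          omega
        · rw [if_pos hα, if_pos hβ, if_pos hab, if_pos hab4, if_pos hab5]
          omega

open scoped Classical in
lemma wt_alpha (n a₁ a₂ a₃ a₄ a₅ : ℕ) (hn : n = 2+a₁+a₂+a₃+a₄+a₅) (α : F4) (hα : α ≠ 0) :
    wt (α • row1 n a₁ + (0:F4) • row2 n a₁ a₂ a₃ a₄) = 1+a₂+a₃+a₄+a₅ := by
  classical
  rw [wt_combo n a₁ a₂ a₃ a₄ a₅ hn α 0,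
    if_pos hα, if_neg (by simp), if_pos (by simpa using hα), if_pos (by simpa using hα),
    if_pos (by simpa using hα)]
  omega

lemma wt_row1' (n a₁ a₂ a₃ a₄ a₅ : ℕ) (hn : n = 2+a₁+a₂+a₃+a₄+a₅) :
    wt (row1 n a₁) = 1+a₂+a₃+a₄+a₅ := by
  rw [row1_eq_combo n a₁ a₂ a₃ a₄]
  exact wt_alpha n a₁ a₂ a₃ a₄ a₅ hn 1 one_ne_zero

open scoped Classical in
lemma wt_oneone (n a₁ a₂ a₃ a₄ a₅ : ℕ) (hn : n = 2+a₁+a₂+a₃+a₄+a₅) :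
    wt (row1 n a₁ + row2 n a₁ a₂ a₃ a₄) = (1+a₂) + (1+a₁) + a₄ + a₅ := by
  classical
  have e : row1 n a₁ + row2 n a₁ a₂ a₃ a₄
      = (1:F4) • row1 n a₁ + (1:F4) • row2 n a₁ a₂ a₃ a₄ := by simp
  have h11 : (1:F4) + 1 = 0 := by linear_combination F4.two_eq_zero
  have e4 : (1:F4) + 1*ω4 = ω4^2 := by rw [ω4_sq]; ring
  have e5 : (1:F4) + 1*ω4^2 = ω4 := by linear_combination ω4_sq + F4.two_eq_zero
  have h4' : (1:F4) + 1*ω4 ≠ 0 := by rw [e4]; exact ω4_sq_ne_zero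
  have h5' : (1:F4) + 1*ω4^2 ≠ 0 := by rw [e5]; exact ω4_ne_zero
  rw [e, wt_combo n a₁ a₂ a₃ a₄ a₅ hn 1 1, if_pos one_ne_zero, if_pos one_ne_zero,
    if_neg (not_not.mpr h11), if_pos h4', if_pos h5']
  omega

/-- for `m ≥ 3`, `C(m, m - 2, m, m, m)` and `C(m, m - 3, m + 1, m, m)` are
inequivalent optimal Hermitian LCD `[5m, 2, 4m - 1]` codes. -/
theorem stmt18 (m : ℕ) (hm : 3 ≤ m) :
    IsOptimalLCD (5 * m) (4 * m - 1) (Ccode (5 * m) m (m - 2) m m m) ∧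
    IsOptimalLCD (5 * m) (4 * m - 1) (Ccode (5 * m) m (m - 3) (m + 1) m m) ∧
    ¬ codeEquiv (Ccode (5 * m) m (m - 2) m m m) (Ccode (5 * m) m (m - 3) (m + 1) m m) := by
  classical
  obtain ⟨k, rfl⟩ : ∃ k, m = k + 3 := ⟨m - 3, by omega⟩
  rw [show k + 3 - 2 = k + 1 by omega, show k + 3 - 3 = k by omega,
    show 4 * (k + 3) - 1 = 4*k+11 by omega, show 5 * (k + 3) = 5*k+15 by omega]
  have hn1 : 5*k+15 = 2+(k+3)+(k+1)+(k+3)+(k+3)+(k+3) := by omega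
  have hn2 : 5*k+15 = 2+(k+3)+k+(k+3+1)+(k+3)+(k+3) := by omega
  have hopt : (4*k+11) = optimalDist (5*k+15) := by
    rw [optimalDist, if_neg (by omega)]
    omega
  -- membership helpers
  have hr1mem1 : row1 (5*k+15) (k+3) ∈ Ccode (5*k+15) (k+3) (k+1) (k+3) (k+3) (k+3) := by
    rw [Ccode]; exact Submodule.subset_span (by simp)
  have hr2mem1 : row2 (5*k+15) (k+3) (k+1) (k+3) (k+3)
      ∈ Ccode (5*k+15) (k+3) (k+1) (k+3) (k+3) (k+3) := by
    rw [Ccode]; exact Submodule.subset_span (by simp)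
  have hr1mem2 : row1 (5*k+15) (k+3) ∈ Ccode (5*k+15) (k+3) k (k+3+1) (k+3) (k+3) := by
    rw [Ccode]; exact Submodule.subset_span (by simp)
  have hr2mem2 : row2 (5*k+15) (k+3) k (k+3+1) (k+3)
      ∈ Ccode (5*k+15) (k+3) k (k+3+1) (k+3) (k+3) := by
    rw [Ccode]; exact Submodule.subset_span (by simp)
  refine ⟨⟨?_, ⟨?_, ?_⟩, ?_, hopt⟩, ⟨?_, ⟨?_, ?_⟩, ?_, hopt⟩, ?_⟩
  -- code 1 : finrank
  · exact finrank_Ccode _ _ _ _ _ _ (by omega)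
  -- code 1 : min weight lower bound
  · intro x hx hx0
    rw [Ccode] at hx
    obtain ⟨α, β, rfl⟩ := Submodule.mem_span_pair.mp hx
    by_cases hβ : β = 0
    · have hα : α ≠ 0 := by
        intro hα
        exact hx0 (by rw [hα, hβ]; simp)
      rw [hβ, wt_alpha (5*k+15) (k+3) (k+1) (k+3) (k+3) (k+3) hn1 α hα]
      omega
    · exact wt_lower_beta (5*k+15) (k+3) (k+1) (k+3) (k+3) (k+3) (4*k+11) hn1
        (by omega) (by omega) (by omega) (by omega) α β hβ
  -- code 1 : min weight attained
  · exact ⟨row1 (5*k+15) (k+3), hr1mem1, row1_ne_zero _ _ (by omega),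
      by rw [wt_row1' (5*k+15) (k+3) (k+1) (k+3) (k+3) (k+3) hn1]; omega⟩
  -- code 1 : LCD
  · rw [IsHermLCD, eq_bot_iff]
    intro x hx
    obtain ⟨hxC, hxD⟩ := Submodule.mem_inf.mp hx
    rw [Ccode] at hxC
    obtain ⟨α, β, rfl⟩ := Submodule.mem_span_pair.mp hxC
    have h1 : hermInner (α • row1 (5*k+15) (k+3) + β • row2 (5*k+15) (k+3) (k+1) (k+3) (k+3))
        (row1 (5*k+15) (k+3)) = 0 := hxD _ hr1mem1
    have h2 : hermInner (α • row1 (5*k+15) (k+3) + β • row2 (5*k+15) (k+3) (k+1) (k+3) (k+3))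
        (row2 (5*k+15) (k+3) (k+1) (k+3) (k+3)) = 0 := hxD _ hr2mem1
    have g1 := herm_combo (5*k+15) (k+3) (k+1) (k+3) (k+3) (k+3) hn1 α β 1 0
    rw [one_smul, zero_smul, add_zero] at g1
    rw [g1] at h1
    have g2 := herm_combo (5*k+15) (k+3) (k+1) (k+3) (k+3) (k+3) hn1 α β 0 1
    rw [zero_smul, one_smul, zero_add] at g2
    rw [g2] at h2
    simp only [nsmul_eq_mul] at h1 h2
    push_cast at h1 h2
    have hα : α = 0 := by
      linear_combination h1 - (2*(k:F4)+5)*α*F4.two_eq_zero - ((k:F4)+3)*β*ω4_spec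
    rw [hα] at h2
    have hβ : β = 0 := by
      linear_combination h2 - (2*(k:F4)+6)*β*F4.two_eq_zero
        - ((k:F4)+3)*β*(ω4-1)*(ω4^3+2)*ω4_spec
    rw [Submodule.mem_bot, hα, hβ]
    simp
  -- code 2 : finrank
  · exact finrank_Ccode _ _ _ _ _ _ (by omega)
  -- code 2 : min weight lower bound
  · intro x hx hx0
    rw [Ccode] at hx
    obtain ⟨α, β, rfl⟩ := Submodule.mem_span_pair.mp hx
    by_cases hβ : β = 0
    · have hα : α ≠ 0 := by
        intro hα
        exact hx0 (by rw [hα, hβ]; simp)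
      rw [hβ, wt_alpha (5*k+15) (k+3) k (k+3+1) (k+3) (k+3) hn2 α hα]
      omega
    · exact wt_lower_beta (5*k+15) (k+3) k (k+3+1) (k+3) (k+3) (4*k+11) hn2
        (by omega) (by omega) (by omega) (by omega) α β hβ
  -- code 2 : min weight attained
  · exact ⟨row1 (5*k+15) (k+3), hr1mem2, row1_ne_zero _ _ (by omega),
      by rw [wt_row1' (5*k+15) (k+3) k (k+3+1) (k+3) (k+3) hn2]; omega⟩
  -- code 2 : LCD
  · rw [IsHermLCD, eq_bot_iff]
    intro x hx
    obtain ⟨hxC, hxD⟩ := Submodule.mem_inf.mp hx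
    rw [Ccode] at hxC
    obtain ⟨α, β, rfl⟩ := Submodule.mem_span_pair.mp hxC
    have h1 : hermInner (α • row1 (5*k+15) (k+3) + β • row2 (5*k+15) (k+3) k (k+3+1) (k+3))
        (row1 (5*k+15) (k+3)) = 0 := hxD _ hr1mem2
    have h2 : hermInner (α • row1 (5*k+15) (k+3) + β • row2 (5*k+15) (k+3) k (k+3+1) (k+3))
        (row2 (5*k+15) (k+3) k (k+3+1) (k+3)) = 0 := hxD _ hr2mem2
    have g1 := herm_combo (5*k+15) (k+3) k (k+3+1) (k+3) (k+3) hn2 α β 1 0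
    rw [one_smul, zero_smul, add_zero] at g1
    rw [g1] at h1
    have g2 := herm_combo (5*k+15) (k+3) k (k+3+1) (k+3) (k+3) hn2 α β 0 1
    rw [zero_smul, one_smul, zero_add] at g2
    rw [g2] at h2
    simp only [nsmul_eq_mul] at h1 h2
    push_cast at h1 h2
    have hα : α = 0 := by
      linear_combination h2 - (2*(k:F4)+7)*β*F4.two_eq_zero
        - ((k:F4)+3)*((ω4^2-ω4+1)*α + (ω4-1)*(ω4^3+2)*β)*ω4_spec
    rw [hα] at h1
    have hβ : β = 0 := by
      linear_combination h1 - ((k:F4)+3)*β*ω4_spec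
    rw [Submodule.mem_bot, hα, hβ]
    simp
  -- inequivalence
  · rintro ⟨σ, s, hs, hmap⟩
    have hw1 : row1 (5*k+15) (k+3) ∈ Ccode (5*k+15) (k+3) k (k+3+1) (k+3) (k+3) := hr1mem2
    have hw2 : row1 (5*k+15) (k+3) + row2 (5*k+15) (k+3) k (k+3+1) (k+3)
        ∈ Ccode (5*k+15) (k+3) k (k+3+1) (k+3) (k+3) :=
      Submodule.add_mem _ hr1mem2 hr2mem2
    rw [← hmap] at hw1 hw2
    obtain ⟨y1, hy1C, hy1⟩ := Submodule.mem_map.mp hw1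
    obtain ⟨y2, hy2C, hy2⟩ := Submodule.mem_map.mp hw2
    rw [Ccode] at hy1C hy2C
    obtain ⟨α₁, β₁, rfl⟩ := Submodule.mem_span_pair.mp hy1C
    obtain ⟨α₂, β₂, rfl⟩ := Submodule.mem_span_pair.mp hy2C
    have hwt1 : wt (α₁ • row1 (5*k+15) (k+3) + β₁ • row2 (5*k+15) (k+3) (k+1) (k+3) (k+3))
        = 4*k+11 := by
      rw [← wt_monoMap σ s hs, hy1, wt_row1' (5*k+15) (k+3) k (k+3+1) (k+3) (k+3) hn2]
      omega
    have hwt2 : wt (α₂ • row1 (5*k+15) (k+3) + β₂ • row2 (5*k+15) (k+3) (k+1) (k+3) (k+3))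
        = 4*k+11 := by
      rw [← wt_monoMap σ s hs, hy2, wt_oneone (5*k+15) (k+3) k (k+3+1) (k+3) (k+3) hn2]
      omega
    have hβ₁ : β₁ = 0 := by
      by_contra hb
      have := wt_lower_beta (5*k+15) (k+3) (k+1) (k+3) (k+3) (k+3) (4*k+12) hn1
        (by omega) (by omega) (by omega) (by omega) α₁ β₁ hb
      omega
    have hβ₂ : β₂ = 0 := by
      by_contra hb
      have := wt_lower_beta (5*k+15) (k+3) (k+1) (k+3) (k+3) (k+3) (4*k+12) hn1
        (by omega) (by omega) (by omega) (by omega) α₂ β₂ hb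
      omega
    have hα₁ : α₁ ≠ 0 := by
      intro h0
      apply row1_ne_zero (5*k+15) (k+3) (by omega)
      rw [← hy1, h0, hβ₁]
      simp
    have key : α₂ • row1 (5*k+15) (k+3)
        - α₁ • (row1 (5*k+15) (k+3) + row2 (5*k+15) (k+3) k (k+3+1) (k+3)) = 0 := by
      calc α₂ • row1 (5*k+15) (k+3)
            - α₁ • (row1 (5*k+15) (k+3) + row2 (5*k+15) (k+3) k (k+3+1) (k+3))
          = (monoMap σ s)
              (α₂ • (α₁ • row1 (5*k+15) (k+3) + β₁ • row2 (5*k+15) (k+3) (k+1) (k+3) (k+3))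
              - α₁ • (α₂ • row1 (5*k+15) (k+3) + β₂ • row2 (5*k+15) (k+3) (k+1) (k+3) (k+3))) := by
            rw [map_sub, map_smul, map_smul, hy1, hy2]
        _ = 0 := by
            rw [show α₂ • (α₁ • row1 (5*k+15) (k+3) + β₁ • row2 (5*k+15) (k+3) (k+1) (k+3) (k+3))
                - α₁ • (α₂ • row1 (5*k+15) (k+3) + β₂ • row2 (5*k+15) (k+3) (k+1) (k+3) (k+3)) = 0
              from by rw [hβ₁, hβ₂]; module, map_zero]
    have hexp : (α₂ - α₁) • row1 (5*k+15) (k+3)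
        + (-α₁) • row2 (5*k+15) (k+3) k (k+3+1) (k+3)
        = α₂ • row1 (5*k+15) (k+3)
          - α₁ • (row1 (5*k+15) (k+3) + row2 (5*k+15) (k+3) k (k+3+1) (k+3)) := by
      module
    obtain ⟨hA, hB⟩ := rows_li (5*k+15) (k+3) k (k+3+1) (k+3) (by omega) (α₂ - α₁) (-α₁)
      (by rw [hexp, key])
    exact hα₁ (neg_eq_zero.mp hB)
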